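/- For all integers n ≥ 3, one has B((n−1)/2, 1/2)² ≥ 1/(e·(n−1)), where B is the Beta function and e is Euler's number. -/

import Mathlib

/-!
For `a ≥ 1`, on `[1 - 1/a, 1]` the factor `t ^ (a - 1)` is at least `(1 - 1/a) ^ (a - 1) ≥ e⁻¹`
(from `log x ≥ 1 - 1/x`), so `B(a, b) ≥ e⁻¹ ∫_{1-1/a}^1 (1 - t)^(b-1) dt = e⁻¹ / (b a^b)`.
For `b = 1/2` and `a = (n - 1)/2` this gives `B² ≥ 8 / (e² (n - 1))`, and `e ≤ 8`.
-/

/-- The Beta function `B(a,b) = ∫_0^1 t^{a-1} (1-t)^{b-1} dt`. -/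
noncomputable def betaFn (a b : ℝ) : ℝ :=
  ∫ t in (0:ℝ)..1, t ^ (a - 1) * (1 - t) ^ (b - 1)

open Real Set MeasureTheory intervalIntegral

theorem intervalIntegrable_one_sub_rpow {r : ℝ} (hr : -1 < r) (u v : ℝ) :
    IntervalIntegrable (fun t : ℝ => (1 - t) ^ r) volume u v := by
  simpa using (intervalIntegrable_rpow' (a := 1 - u) (b := 1 - v) hr).comp_sub_left 1

theorem integral_one_sub_rpow {b : ℝ} (hb : 0 < b) (c : ℝ) :
    ∫ t in c..1, (1 - t) ^ (b - 1) = (1 - c) ^ b / b := by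
  rw [integral_comp_sub_left (fun u => u ^ (b - 1)) 1,
    integral_rpow (Or.inl (by linarith)), sub_add_cancel, sub_self, zero_rpow hb.ne']
  ring

theorem intervalIntegrable_rpow_mul_one_sub_rpow {a b : ℝ} (ha : 1 ≤ a) (hb : 0 < b) :
    IntervalIntegrable (fun t : ℝ => t ^ (a - 1) * (1 - t) ^ (b - 1)) volume 0 1 := by
  refine (intervalIntegrable_one_sub_rpow (r := b - 1) (by linarith) 0 1).mono_fun ?_ ?_
  · exact ((measurable_id.pow_const _).mul
      ((measurable_const.sub measurable_id).pow_const _)).aestronglyMeasurable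
  · rw [Filter.EventuallyLE, ae_restrict_iff' measurableSet_uIoc]
    filter_upwards with t ht
    rw [uIoc_of_le zero_le_one] at ht
    have h1t : 0 ≤ (1 - t) ^ (b - 1) := rpow_nonneg (by linarith [ht.2]) _
    have ht0 : 0 ≤ t ^ (a - 1) := rpow_nonneg ht.1.le _
    rw [norm_of_nonneg (mul_nonneg ht0 h1t), norm_of_nonneg h1t]
    exact mul_le_of_le_one_left h1t (rpow_le_one ht.1.le ht.2 (by linarith))

theorem rpow_mul_one_sub_rpow_div_le_betaFn {a b c : ℝ} (ha : 1 ≤ a) (hb : 0 < b)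
    (hc₀ : 0 ≤ c) (hc₁ : c ≤ 1) : c ^ (a - 1) * ((1 - c) ^ b / b) ≤ betaFn a b := by
  have hint := intervalIntegrable_rpow_mul_one_sub_rpow ha hb
  have hnonneg : ∀ t ∈ Icc (0:ℝ) 1, 0 ≤ t ^ (a - 1) * (1 - t) ^ (b - 1) := fun t ht =>
    mul_nonneg (rpow_nonneg ht.1 _) (rpow_nonneg (by linarith [ht.2]) _)
  calc c ^ (a - 1) * ((1 - c) ^ b / b)
      = ∫ t in c..1, c ^ (a - 1) * (1 - t) ^ (b - 1) := by
        rw [intervalIntegral.integral_const_mul, integral_one_sub_rpow hb c]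
    _ ≤ ∫ t in c..1, t ^ (a - 1) * (1 - t) ^ (b - 1) := by
        refine integral_mono_on hc₁
          ((intervalIntegrable_one_sub_rpow (r := b - 1) (by linarith) c 1).const_mul _)
          (hint.mono_set ?_) fun t ht => ?_
        · rw [uIcc_of_le hc₁, uIcc_of_le zero_le_one]
          exact Icc_subset_Icc hc₀ le_rfl
        · exact mul_le_mul_of_nonneg_right (rpow_le_rpow hc₀ ht.1 (by linarith))
            (rpow_nonneg (by linarith [ht.2]) _)
    _ ≤ betaFn a b := by
        refine integral_mono_interval hc₀ hc₁ le_rfl ?_ hint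
        rw [Filter.EventuallyLE, ae_restrict_iff' measurableSet_Ioc]
        exact Filter.Eventually.of_forall fun t ht => hnonneg t (Ioc_subset_Icc_self ht)

theorem exp_neg_one_le_one_sub_inv_rpow {a : ℝ} (ha : 1 ≤ a) :
    exp (-1) ≤ (1 - a⁻¹) ^ (a - 1) := by
  rcases ha.eq_or_lt with rfl | ha
  · simp
  have hc : 0 < 1 - a⁻¹ := sub_pos.2 (inv_lt_one_of_one_lt₀ ha)
  rw [rpow_def_of_pos hc, exp_le_exp]
  have hlog : -(a - 1)⁻¹ ≤ log (1 - a⁻¹) := by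
    have := one_sub_inv_le_log_of_pos hc
    rwa [show 1 - (1 - a⁻¹)⁻¹ = -(a - 1)⁻¹ by field_simp; ring] at this
  calc -1 = -(a - 1)⁻¹ * (a - 1) := by field_simp
    _ ≤ log (1 - a⁻¹) * (a - 1) := mul_le_mul_of_nonneg_right hlog (by linarith)

theorem exp_neg_one_div_le_betaFn {a b : ℝ} (ha : 1 ≤ a) (hb : 0 < b) :
    exp (-1) / (b * a ^ b) ≤ betaFn a b := by
  have ha₀ : 0 < a := by linarith
  have hc₁ : 1 - a⁻¹ ≤ 1 := by linarith [inv_pos.2 ha₀]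
  have hc₀ : 0 ≤ 1 - a⁻¹ := sub_nonneg.2 (inv_le_one_of_one_le₀ ha)
  calc exp (-1) / (b * a ^ b) = exp (-1) * ((1 - (1 - a⁻¹)) ^ b / b) := by
        rw [sub_sub_cancel, inv_rpow ha₀.le]; field_simp
    _ ≤ (1 - a⁻¹) ^ (a - 1) * ((1 - (1 - a⁻¹)) ^ b / b) :=
        mul_le_mul_of_nonneg_right (exp_neg_one_le_one_sub_inv_rpow ha) (by positivity)
    _ ≤ betaFn a b := rpow_mul_one_sub_rpow_div_le_betaFn ha hb hc₀ hc₁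

/-- For all integers `n ≥ 3`, `B((n−1)/2, 1/2)² ≥ 1/(e·(n−1))`. -/
theorem betaFn_sq_ge (n : ℕ) (hn : 3 ≤ n) :
    betaFn (((n:ℝ) - 1) / 2) (1 / 2) ^ 2 ≥ 1 / (Real.exp 1 * ((n:ℝ) - 1)) := by
  set a : ℝ := ((n:ℝ) - 1) / 2 with ha_def
  have ha : 1 ≤ a := by
    have : (3:ℝ) ≤ n := by exact_mod_cast hn
    linarith
  have hsqrt : (a ^ (1 / 2 : ℝ)) ^ 2 = a := by
    rw [← rpow_natCast, ← rpow_mul (by linarith)]; norm_num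
  have hB := pow_le_pow_left₀ (by positivity) (exp_neg_one_div_le_betaFn ha one_half_pos) 2
  rw [ge_iff_le, show (n:ℝ) - 1 = 2 * a by rw [ha_def]; ring]
  refine le_trans ?_ hB
  rw [div_pow, mul_pow, hsqrt, exp_neg]
  field_simp
  linarith [exp_one_lt_d9]
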